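/- Let A be a topological ring, Γ and Δ linearly ordered commutative groups with zero, v : A → Γ a continuous valuation, and φ : Γ → Δ a quotient by a convex subgroup. Assume v is analytic, i.e. there exists a topologically nilpotent a ∈ A with v(a) ≠ 0. Then the vertical generalization w = φ ∘ v is continuous if and only if w is a nontrivial valuation, i.e. there exists b ∈ A with w(b) ≠ 0 and w(b) ≠ 1. (Lemma 3.3, analytic case.) -/

import Mathlib

/-- An element of a topological ring is topologically nilpotent if its powers tend to zero. -/
def IsTopologicallyNilpotentElem {A : Type*} [Ring A] [TopologicalSpace A] (a : A) : Prop :=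
  Filter.Tendsto (fun n : ℕ => a ^ n) Filter.atTop (nhds 0)

/-- The value group of a `Γ`-valued function on `A`: the subgroup of `Γˣ` generated by the
nonzero values. -/
def valueGroupOf {A : Type*} {Γ : Type*} [LinearOrderedCommGroupWithZero Γ]
    (f : A → Γ) : Subgroup Γˣ :=
  Subgroup.closure {γ : Γˣ | ∃ a : A, f a = (γ : Γ)}

/-- Huber's characterization of continuity for valuations on Huber rings
([Hu93], Theorem 3.1). -/
def IsHuberContinuous {A : Type*} [Ring A] [TopologicalSpace A] {Γ : Type*}
    [LinearOrderedCommGroupWithZero Γ] (f : A → Γ) : Prop :=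
  ∀ a : A, IsTopologicallyNilpotentElem a → ∀ γ ∈ valueGroupOf f, ∃ n : ℕ, f a ^ n < (γ : Γ)

/-- A monoid-with-zero homomorphism `φ : Γ → Δ` is a quotient by a convex subgroup if
`φ x = 0 ↔ x = 0` and `φ x < φ y ↔ (x·h < y for all h with φ h = 1)`. -/
def IsQuotientByConvexSubgroup {Γ Δ : Type*} [LinearOrderedCommGroupWithZero Γ]
    [LinearOrderedCommGroupWithZero Δ] (φ : Γ →*₀ Δ) : Prop :=
  (∀ x : Γ, φ x = 0 ↔ x = 0) ∧
  (∀ x y : Γ, φ x < φ y ↔ ∀ h : Γ, φ h = 1 → x * h < y)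

/-!
If `w = φ ∘ v` is continuous, a topologically nilpotent `a` with `v a ≠ 0` has `w (a ^ n) < 1` for
some `n`, so `w` is nontrivial. Conversely, a value `w b ∉ {0, 1}` yields some `β` in the value group
of `v` with `φ β < 1`; continuity of `v` then forces `w a < 1` for every topologically nilpotent `a`.
Since every element of the value group of `w` is the image of one of `v`, a bound `v a ^ n < δ`
becomes `w a ^ (n + 1) ≤ φ δ * w a < φ δ`.
-/

section

variable {A Γ Δ : Type*} [LinearOrderedCommGroupWithZero Γ] [LinearOrderedCommGroupWithZero Δ]

theorem IsQuotientByConvexSubgroup.monotone {φ : Γ →*₀ Δ} (hφ : IsQuotientByConvexSubgroup φ) :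
    Monotone φ := by
  intro x y hxy
  by_contra hlt
  have hyx := (hφ.2 y x).mp (lt_of_not_ge hlt) 1 (map_one φ)
  rw [mul_one] at hyx
  exact hyx.not_ge hxy

theorem valueGroupOf_comp_le_map (f : A → Γ) (φ : Γ →*₀ Δ) :
    valueGroupOf (fun a => φ (f a)) ≤ (valueGroupOf f).map (Units.map (φ : Γ →* Δ)) := by
  refine (Subgroup.closure_le _).mpr ?_
  rintro γ ⟨a, ha : φ (f a) = γ⟩
  have hfa : f a ≠ 0 := fun h => γ.ne_zero (by rw [← ha, h, map_zero])
  exact ⟨Units.mk0 (f a) hfa, Subgroup.subset_closure ⟨a, rfl⟩, Units.ext ha⟩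

theorem exists_mem_valueGroupOf_map_lt_one {f : A → Γ} {φ : Γ →*₀ Δ} {b : A}
    (hb₀ : φ (f b) ≠ 0) (hb₁ : φ (f b) ≠ 1) :
    ∃ β : Γˣ, β ∈ valueGroupOf f ∧ φ β < 1 := by
  have hfb : f b ≠ 0 := fun h => hb₀ (by rw [h, map_zero])
  have hmem : Units.mk0 (f b) hfb ∈ valueGroupOf f := Subgroup.subset_closure ⟨b, rfl⟩
  rcases hb₁.lt_or_gt with hlt | hgt
  · exact ⟨_, hmem, hlt⟩
  · refine ⟨_, inv_mem hmem, ?_⟩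
    rw [Units.val_inv_eq_inv_val, map_inv₀]
    exact inv_lt_one_of_one_lt₀ hgt

variable [Ring A] [TopologicalSpace A]

theorem IsHuberContinuous.exists_ne_zero_ne_one {w : Valuation A Γ}
    (hw : IsHuberContinuous w) {a : A} (ha : IsTopologicallyNilpotentElem a) (ha₀ : w a ≠ 0) :
    ∃ b : A, w b ≠ 0 ∧ w b ≠ 1 := by
  obtain ⟨n, hn⟩ := hw a ha 1 (one_mem _)
  refine ⟨a ^ n, ?_, ?_⟩ <;> rw [map_pow]
  · exact pow_ne_zero n ha₀
  · exact hn.ne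

theorem IsHuberContinuous.map_lt_one {f : A → Γ} (hf : IsHuberContinuous f) {φ : Γ →*₀ Δ}
    (hφ : Monotone φ) {β : Γˣ} (hβ : β ∈ valueGroupOf f) (hβ₁ : φ β < 1) {a : A}
    (ha : IsTopologicallyNilpotentElem a) : φ (f a) < 1 := by
  obtain ⟨n, hn⟩ := hf a ha β hβ
  have hpow : φ (f a) ^ n < 1 := by
    rw [← map_pow]
    exact (hφ hn.le).trans_lt hβ₁
  by_contra hge
  exact hpow.not_ge (one_le_pow₀ (le_of_not_gt hge))

theorem IsHuberContinuous.comp {f : A → Γ} (hf : IsHuberContinuous f) {φ : Γ →*₀ Δ}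
    (hφ : Monotone φ) (hlt : ∀ a, IsTopologicallyNilpotentElem a → φ (f a) < 1) :
    IsHuberContinuous (fun a => φ (f a)) := by
  intro a ha γ hγ
  obtain ⟨δ, hδ, rfl⟩ := Subgroup.mem_map.mp (valueGroupOf_comp_le_map f φ hγ)
  obtain ⟨n, hn⟩ := hf a ha δ hδ
  refine ⟨n + 1, ?_⟩
  calc φ (f a) ^ (n + 1) = φ (f a ^ n) * φ (f a) := by rw [map_pow, pow_succ]
    _ ≤ φ δ * φ (f a) := by gcongr; exact hφ hn.le
    _ < φ δ := mul_lt_of_lt_one_right (Units.map (φ : Γ →* Δ) δ).zero_lt (hlt a ha)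

end

/-- If `v` is continuous and analytic (some topologically nilpotent element has nonzero value),
then the vertical generalization `w = φ ∘ v` is continuous if and only if it is a nontrivial
valuation. -/
theorem vertical_generalization_continuous_iff_nontrivial_of_analytic
    {A : Type*} [Ring A] [TopologicalSpace A]
    {Γ Δ : Type*} [LinearOrderedCommGroupWithZero Γ] [LinearOrderedCommGroupWithZero Δ]
    (v : Valuation A Γ) (hv : IsHuberContinuous (⇑v))
    (φ : Γ →*₀ Δ) (hφ : IsQuotientByConvexSubgroup φ)
    (han : ∃ a : A, IsTopologicallyNilpotentElem a ∧ v a ≠ 0) :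
    IsHuberContinuous (fun a : A => φ (v a)) ↔
      ∃ b : A, φ (v b) ≠ 0 ∧ φ (v b) ≠ 1 := by
  constructor
  · intro hw
    obtain ⟨a, ha, hva⟩ := han
    exact IsHuberContinuous.exists_ne_zero_ne_one (w := v.map φ hφ.monotone) hw ha
      (mt (hφ.1 (v a)).mp hva)
  · rintro ⟨b, hb₀, hb₁⟩
    obtain ⟨β, hβ, hβ₁⟩ := exists_mem_valueGroupOf_map_lt_one hb₀ hb₁
    exact hv.comp hφ.monotone fun a ha => hv.map_lt_one hφ.monotone hβ hβ₁ ha
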